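/- arXiv:2303.02614 — 2 statements merged into one kernel-verified Lean document; each statement's English description precedes it below -/
import Mathlib

section
/- The direct limit of a chain of structures {M_x : x ∈ X} indexed by a well-ordered poset X is isomorphic to the prime product ∏_{x∈X} M_x / F, where F = { ↑x : x ∈ X } is the filter of principal upsets. -/
namespace PosLogic

open FirstOrder FirstOrder.Language FirstOrder.Language.Structure Set

universe u v w x y z

variable {L : FirstOrder.Language.{u, v}}

/-- Positive formulas: built from atomic formulas and `⊥` using `∧`, `∨` and `∃`. -/
inductive PosFormula (L : FirstOrder.Language.{u, v}) (α : Type y) : ℕ → Type (max u v y)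
  | falsum {n : ℕ} : PosFormula L α n
  | equal {n : ℕ} (t₁ t₂ : L.Term (α ⊕ Fin n)) : PosFormula L α n
  | rel {n l : ℕ} (R : L.Relations l) (ts : Fin l → L.Term (α ⊕ Fin n)) : PosFormula L α n
  | and {n : ℕ} (φ ψ : PosFormula L α n) : PosFormula L α n
  | or {n : ℕ} (φ ψ : PosFormula L α n) : PosFormula L α n
  | ex {n : ℕ} (φ : PosFormula L α (n + 1)) : PosFormula L α n

variable {α : Type y}

/-- Realization (satisfaction) of a positive formula. -/
def PosFormula.Realize {M : Type w} [L.Structure M] :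
    ∀ {n : ℕ}, PosFormula L α n → (α → M) → (Fin n → M) → Prop
  | _, .falsum, _, _ => False
  | _, .equal t₁ t₂, v, xs => t₁.realize (Sum.elim v xs) = t₂.realize (Sum.elim v xs)
  | _, .rel R ts, v, xs => RelMap R fun i => (ts i).realize (Sum.elim v xs)
  | _, .and φ ψ, v, xs => φ.Realize v xs ∧ ψ.Realize v xs
  | _, .or φ ψ, v, xs => φ.Realize v xs ∨ ψ.Realize v xs
  | _, .ex φ, v, xs => ∃ a, φ.Realize v (Fin.snoc xs a)

/-- Positive sentences. -/
abbrev PosSentence (L : FirstOrder.Language.{u, v}) : Type (max u v) := PosFormula L Empty 0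

/-- A positive sentence holds in a structure. -/
def PosSentence.Realize (M : Type w) [L.Structure M] (φ : PosSentence L) : Prop :=
  PosFormula.Realize (M := M) φ Empty.elim (fun i => i.elim0)

/-- Two structures are positively equivalent when they satisfy the same positive sentences. -/
def PosEquivalent (M : Type w) (N : Type x) [L.Structure M] [L.Structure N] : Prop :=
  ∀ φ : PosSentence L, PosSentence.Realize M φ ↔ PosSentence.Realize N φ

/-- A filter over a poset: a nonempty collection of upsets, upward closed among upsets and
closed under binary intersections. -/
structure PosetFilter (X : Type x) [Preorder X] where
  sets : Set (Set X)
  upper' : ∀ V ∈ sets, IsUpperSet V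
  nonempty' : sets.Nonempty
  mono' : ∀ V ∈ sets, ∀ W : Set X, IsUpperSet W → V ⊆ W → W ∈ sets
  inter' : ∀ V ∈ sets, ∀ W ∈ sets, V ∩ W ∈ sets

/-- A prime filter over a poset. -/
def PosetFilter.Prime {X : Type x} [Preorder X] (F : PosetFilter X) : Prop :=
  ∅ ∉ F.sets ∧ ∀ V W : Set X, IsUpperSet V → IsUpperSet W →
    V ∪ W ∈ F.sets → V ∈ F.sets ∨ W ∈ F.sets

/-- Predicate version: `S` is a filter over the poset `X`. -/
def IsPosetFilter {X : Type x} [Preorder X] (S : Set (Set X)) : Prop :=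
  (∀ V ∈ S, IsUpperSet V) ∧ S.Nonempty ∧
    (∀ V ∈ S, ∀ W : Set X, IsUpperSet W → V ⊆ W → W ∈ S) ∧
    (∀ V ∈ S, ∀ W ∈ S, V ∩ W ∈ S)

/-- Predicate version: `S` is a prime filter over the poset `X`. -/
def IsPrimePosetFilter {X : Type x} [Preorder X] (S : Set (Set X)) : Prop :=
  IsPosetFilter S ∧ ∅ ∉ S ∧ ∀ V W : Set X, IsUpperSet V → IsUpperSet W →
    V ∪ W ∈ S → V ∈ S ∨ W ∈ S

/-- A wellfounded forest: a poset whose principal downsets are well ordered. -/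
def IsWellFoundedForest (X : Type x) [Preorder X] : Prop :=
  ∀ a : X, IsWellOrder (Set.Iic a) (· < ·)

/-- An ordered system of structures indexed by a poset. -/
structure OrderedSystem (L : FirstOrder.Language.{u, v}) (X : Type x) [Preorder X]
    (M : X → Type w) [∀ a, L.Structure (M a)] where
  hom : ∀ ⦃a b : X⦄, a ≤ b → M a →[L] M b
  hom_id : ∀ (a : X) (m : M a), hom (le_refl a) m = m
  hom_comp : ∀ ⦃a b c : X⦄ (hab : a ≤ b) (hbc : b ≤ c) (m : M a),
    hom hbc (hom hab m) = hom (hab.trans hbc) m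

variable {X : Type x} [PartialOrder X] {M : X → Type w} [∀ a, L.Structure (M a)]

/-- A compatible family in `S_F`: an element of `S_V` for some `V ∈ F`. -/
structure CompFam (D : OrderedSystem L X M) (F : PosetFilter X) where
  dom : Set X
  dom_mem : dom ∈ F.sets
  val : ∀ a ∈ dom, M a
  compat : ∀ ⦃b c : X⦄ (hb : b ∈ dom) (hc : c ∈ dom) (hbc : b ≤ c),
    D.hom hbc (val b hb) = val c hc

variable {D : OrderedSystem L X M} {F : PosetFilter X}

/-- The set `⟦a = b⟧`. -/
def eqSet (a b : CompFam D F) : Set X :=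
  {p | ∃ (ha : p ∈ a.dom) (hb : p ∈ b.dom), a.val p ha = b.val p hb}

theorem eqSet_upper (a b : CompFam D F) : IsUpperSet (eqSet a b) := by
  rintro p q hpq ⟨ha, hb, he⟩
  have hap := F.upper' _ a.dom_mem hpq ha
  have hbp := F.upper' _ b.dom_mem hpq hb
  exact ⟨hap, hbp, by rw [← a.compat ha hap hpq, ← b.compat hb hbp hpq, he]⟩

/-- The relation `≡_F`. -/
instance CompFam.setoid (D : OrderedSystem L X M) (F : PosetFilter X) :
    Setoid (CompFam D F) where
  r a b := eqSet a b ∈ F.sets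
  iseqv := by
    constructor
    · intro a
      exact F.mono' _ a.dom_mem _ (eqSet_upper a a) (fun p hp => ⟨hp, hp, rfl⟩)
    · intro a b h
      refine F.mono' _ h _ (eqSet_upper b a) ?_
      rintro p ⟨ha, hb, he⟩
      exact ⟨hb, ha, he.symm⟩
    · intro a b c hab hbc
      refine F.mono' _ (F.inter' _ hab _ hbc) _ (eqSet_upper a c) ?_
      rintro p ⟨⟨ha, hb, h1⟩, hb', hc, h2⟩
      exact ⟨ha, hc, h1.trans h2⟩

theorem PosetFilter.univ_mem (F : PosetFilter X) : Set.univ ∈ F.sets := by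
  obtain ⟨V, hV⟩ := F.nonempty'
  exact F.mono' _ hV _ isUpperSet_univ (Set.subset_univ V)

theorem PosetFilter.iInter_mem (F : PosetFilter X) :
    ∀ {n : ℕ} (s : Fin n → Set X), (∀ i, s i ∈ F.sets) → (⋂ i, s i) ∈ F.sets := by
  intro n
  induction n with
  | zero =>
    intro s _
    rw [Set.iInter_of_empty]
    exact F.univ_mem
  | succ k ih =>
    intro s hs
    have he : (⋂ i, s i) = s 0 ∩ ⋂ i : Fin k, s i.succ := by
      ext p
      simp only [Set.mem_iInter, Set.mem_inter_iff, Fin.forall_fin_succ]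
    rw [he]
    exact F.inter' _ (hs 0) _ (ih _ fun i => hs i.succ)

/-- Pointwise application of a function symbol to compatible families. -/
def CompFam.app {n : ℕ} (g : L.Functions n) (a : Fin n → CompFam D F) : CompFam D F where
  dom := ⋂ i, (a i).dom
  dom_mem := F.iInter_mem _ fun i => (a i).dom_mem
  val p hp := funMap g fun i => (a i).val p (Set.mem_iInter.1 hp i)
  compat := by
    intro b c hb hc hbc
    rw [Hom.map_fun]
    congr 1
    funext i
    exact (a i).compat _ _ hbc

/-- The set `⟦R(a₁, …, aₙ)⟧`. -/
def relSet {n : ℕ} (R : L.Relations n) (a : Fin n → CompFam D F) : Set X :=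
  {p | ∃ h : ∀ i, p ∈ (a i).dom, RelMap R fun i => (a i).val p (h i)}

/-- The set `⟦φ(a₁, …, aₙ)⟧` for a positive formula `φ`. -/
def posSet {n : ℕ} (φ : PosFormula L Empty n) (a : Fin n → CompFam D F) : Set X :=
  {p | ∃ h : ∀ i, p ∈ (a i).dom,
    PosFormula.Realize φ Empty.elim fun i => (a i).val p (h i)}

/-- The filter product of an ordered system with respect to a filter over the index poset. -/
def FilterProd (D : OrderedSystem L X M) (F : PosetFilter X) : Type (max x w) :=
  Quotient (CompFam.setoid D F)

noncomputable instance FilterProd.structure : L.Structure (FilterProd D F) where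
  funMap {n} g v :=
    Quotient.mk (CompFam.setoid D F) (CompFam.app g fun i => (v i).out)
  RelMap {n} R v :=
    ∃ a : Fin n → CompFam D F,
      (∀ i, Quotient.mk (CompFam.setoid D F) (a i) = v i) ∧ relSet R a ∈ F.sets

/-- `(N, g)` is a direct limit (colimit) cocone of the ordered system `D`. -/
structure IsDirectLimitCocone {X : Type x} [Preorder X] {M : X → Type w}
    [∀ a, L.Structure (M a)] (D : OrderedSystem L X M)
    (N : Type z) [L.Structure N] (g : ∀ a, M a →[L] N) : Prop where
  compat : ∀ ⦃a b : X⦄ (hab : a ≤ b) (m : M a), g b (D.hom hab m) = g a m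
  universal : ∀ (P : Type (max x w z)) [L.Structure P] (h : ∀ a, M a →[L] P),
    (∀ ⦃a b : X⦄ (hab : a ≤ b) (m : M a), h b (D.hom hab m) = h a m) →
    ∃! k : N →[L] P, ∀ (a : X) (m : M a), k (g a m) = h a m

/-- A chain of structures: an ordered system indexed by a nonempty well ordered poset. -/
structure ChainSystem (L : FirstOrder.Language.{u, v}) where
  X : Type w
  [lo : LinearOrder X]
  [ne : Nonempty X]
  wf : WellFoundedLT X
  Mi : X → Type w
  [str : ∀ a, L.Structure (Mi a)]
  sys : OrderedSystem L X Mi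

attribute [instance] ChainSystem.lo ChainSystem.ne ChainSystem.str

/-- An ordered system indexed by a wellfounded forest, together with a prime filter. -/
structure PrimeSystem (L : FirstOrder.Language.{u, v}) where
  X : Type w
  [po : PartialOrder X]
  forest : IsWellFoundedForest X
  Mi : X → Type w
  [str : ∀ a, L.Structure (Mi a)]
  sys : OrderedSystem L X Mi
  F : PosetFilter X
  prime : F.Prime

attribute [instance] PrimeSystem.po PrimeSystem.str

/-- The ultrapower `M^ι/u`. -/
def Ultrapower (M : Type w) (ι : Type z) (u : Ultrafilter ι) :
    Type (max w z) :=
  (↑u : Filter ι).Product fun _ => M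

noncomputable instance Ultrapower.structure (M : Type w) [L.Structure M] (ι : Type z)
    (u : Ultrafilter ι) : L.Structure (Ultrapower M ι u) :=
  inferInstanceAs (L.Structure ((↑u : Filter ι).Product fun _ => M))

/-- A prime power of the structure `N`: a prime product of an ordered system
all of whose structures are `N`. -/
structure PrimePowerOf (L : FirstOrder.Language.{u, v}) (N : Type w) [L.Structure N] where
  X : Type x
  [po : PartialOrder X]
  forest : IsWellFoundedForest X
  sys : OrderedSystem L X fun _ => N
  F : PosetFilter X
  prime : F.Prime

attribute [instance] PrimePowerOf.po

/-- The carrier of a prime power. -/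
def PrimePowerOf.carrier {N : Type w} [L.Structure N] (p : PrimePowerOf L N) :
    Type (max x w) :=
  FilterProd p.sys p.F

noncomputable instance {N : Type w} [L.Structure N] (p : PrimePowerOf L N) :
    L.Structure p.carrier :=
  inferInstanceAs (L.Structure (FilterProd p.sys p.F))

/-- Basic h-inductive sentences: universal closures of implications between
positive formulas. -/
structure BasicHInd (L : FirstOrder.Language.{u, v}) : Type (max u v) where
  n : ℕ
  lhs : PosFormula L Empty n
  rhs : PosFormula L Empty n

/-- Satisfaction of a basic h-inductive sentence. -/
def BasicHInd.Realize (φ : BasicHInd L) (M : Type w) [L.Structure M] : Prop :=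
  ∀ xs : Fin φ.n → M, φ.lhs.Realize Empty.elim xs → φ.rhs.Realize Empty.elim xs

/-- Satisfaction of an h-inductive theory (a set of h-inductive sentences). -/
def ModelsHInd (M : Type w) [L.Structure M] (T : Set (BasicHInd L)) : Prop :=
  ∀ φ ∈ T, φ.Realize M

/-- An immersion: a map preserving and reflecting all positive formulas. -/
def IsImmersion {M : Type w} {N : Type x} [L.Structure M] [L.Structure N]
    (f : N → M) : Prop :=
  ∀ {n : ℕ} (φ : PosFormula L Empty n) (xs : Fin n → N),
    PosFormula.Realize φ Empty.elim xs ↔ PosFormula.Realize φ Empty.elim (f ∘ xs)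

/-- A positively existentially closed model of an h-inductive theory `T`. -/
def IsPec (T : Set (BasicHInd L)) (M : Type w) [L.Structure M] : Prop :=
  ModelsHInd M T ∧ ∀ (P : Type w) [L.Structure P], ModelsHInd P T →
    ∀ f : M →[L] P, IsImmersion (L := L) (⇑f : M → P)

/-- Positive `κ`-saturation. -/
def PositivelySaturatedAt (M : Type w) [L.Structure M] (κ : Cardinal.{w}) : Prop :=
  ∀ (γ : Type w) (vp : γ → M), Cardinal.mk γ < κ →
    ∀ (n : ℕ) (p : Set (PosFormula L γ n)),
      (∀ s : Finset (PosFormula L γ n), ↑s ⊆ p →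
        ∃ xs : Fin n → M, ∀ φ ∈ s, PosFormula.Realize φ vp xs) →
      ∃ xs : Fin n → M, ∀ φ ∈ p, PosFormula.Realize φ vp xs

/-- Positive saturation: positive `|M|`-saturation. -/
def PositivelySaturated (M : Type w) [L.Structure M] : Prop :=
  PositivelySaturatedAt (L := L) M (Cardinal.mk M)

/-! Over a directed index poset, let `F` be a proper filter containing every principal upset `↑a`.
The classes of the families `(D.hom (a ≤ p) m)_{p ≥ a}` form a cocone on the filter product, and
it is jointly surjective: a class is the image of its value at any point of its domain. Sending a
class to the image in the direct limit of its value at any point of its domain is well defined,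
since two points have a common upper bound in the domain, where the values agree. This factors
the limit cocone through the filter product, and the universal property makes the factorisation
an isomorphism. On a nonempty well order the principal upsets are exactly the nonempty upsets,
so they form such a filter, and a prime one. -/

theorem _root_.IsUpperSet.eq_Ici_of_mem_of_subset {Y : Type*} [Preorder Y] {V : Set Y} {a : Y}
    (hV : IsUpperSet V) (ha : a ∈ V) (hsub : V ⊆ Set.Ici a) : V = Set.Ici a :=
  hsub.antisymm (hV.Ici_subset ha)

def principalUpsetFilter (Y : Type*) [LinearOrder Y] [Nonempty Y] [WellFoundedLT Y] :
    PosetFilter Y where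
  sets := {V : Set Y | ∃ a : Y, V = Set.Ici a}
  upper' := by
    rintro V ⟨a, rfl⟩
    exact isUpperSet_Ici a
  nonempty' := ⟨Set.Ici (Classical.arbitrary Y), _, rfl⟩
  mono' := by
    rintro V ⟨a, rfl⟩ W hW hVW
    exact hW.eq_empty_or_Ici.resolve_left
      (Set.nonempty_of_mem (hVW Set.self_mem_Ici)).ne_empty
  inter' := by
    rintro V ⟨a, rfl⟩ W ⟨b, rfl⟩
    exact ⟨a ⊔ b, Set.Ici_inter_Ici⟩

theorem principalUpsetFilter_prime (Y : Type*) [LinearOrder Y] [Nonempty Y] [WellFoundedLT Y] :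
    (principalUpsetFilter Y).Prime := by
  refine ⟨fun ⟨a, ha⟩ => Set.nonempty_Ici.ne_empty ha.symm, ?_⟩
  rintro V W hV hW ⟨r, hr⟩
  have hrVW : r ∈ V ∪ W := hr ▸ Set.self_mem_Ici
  exact hrVW.imp
    (fun hrV => ⟨r, hV.eq_Ici_of_mem_of_subset hrV (hr ▸ Set.subset_union_left)⟩)
    (fun hrW => ⟨r, hW.eq_Ici_of_mem_of_subset hrW (hr ▸ Set.subset_union_right)⟩)

def IsCocone {ι : Type x} [Preorder ι] {A : ι → Type w} [∀ i, L.Structure (A i)]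
    (S : OrderedSystem L ι A) {N : Type z} [L.Structure N] (g : ∀ i, A i →[L] N) : Prop :=
  ∀ ⦃i j : ι⦄ (hij : i ≤ j) (m : A i), g j (S.hom hij m) = g i m

def Hom.equivOfInverses {M₁ : Type y} {M₂ : Type z} [L.Structure M₁] [L.Structure M₂]
    (k : M₁ →[L] M₂) (ℓ : M₂ →[L] M₁) (hleft : Function.LeftInverse ℓ k)
    (hright : Function.RightInverse ℓ k) : M₁ ≃[L] M₂ where
  toFun := k
  invFun := ℓ
  left_inv := hleft
  right_inv := hright
  map_fun' := k.map_fun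
  map_rel' {n} r v := by
    refine ⟨fun h => ?_, k.map_rel r v⟩
    simpa only [← Function.comp_assoc, hleft.comp_eq_id, Function.id_comp] using
      ℓ.map_rel r (k ∘ v) h

namespace IsDirectLimitCocone

variable {ι : Type x} [Preorder ι] {A : ι → Type w} [∀ i, L.Structure (A i)]
  {S : OrderedSystem L ι A} {N : Type z} [L.Structure N] {g : ∀ i, A i →[L] N}

theorem isCocone (hN : IsDirectLimitCocone S N g) : IsCocone S g := hN.compat

/-- The universal property is stated for targets in `Type (max x w z)`; lifting through `ULift`
makes it available for targets in `Type (max x w)`, such as filter products. -/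
theorem exists_hom (hN : IsDirectLimitCocone S N g) {P : Type (max x w)} [L.Structure P]
    {h : ∀ i, A i →[L] P} (hh : IsCocone S h) :
    ∃ k : N →[L] P, ∀ i m, k (g i m) = h i m := by
  let _ : L.Structure (ULift.{z} P) := Equiv.ulift.symm.inducedStructure
  let e : P ≃[L] ULift.{z} P := Equiv.ulift.symm.inducedStructureEquiv
  obtain ⟨k, hk, -⟩ :=
    hN.universal _ (fun i => e.toHom.comp (h i)) fun i j hij m => congrArg e (hh hij m)
  refine ⟨e.symm.toHom.comp k, fun i m => ?_⟩
  simp only [Hom.comp_apply, hk, Equiv.coe_toHom, e.symm_apply_apply]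

theorem eq_of_comp_eq (hN : IsDirectLimitCocone S N g) {k : N →[L] N}
    (hk : ∀ i m, k (g i m) = g i m) (n : N) : k n = n := by
  let _ : L.Structure (ULift.{max x w} N) := Equiv.ulift.symm.inducedStructure
  let e : N ≃[L] ULift.{max x w} N := Equiv.ulift.symm.inducedStructureEquiv
  obtain ⟨k₀, -, huniq⟩ :=
    hN.universal _ (fun i => e.toHom.comp (g i)) fun i j hij m => congrArg e (hN.compat hij m)
  have hek : e.toHom.comp k = k₀ := huniq _ fun i m => congrArg e (hk i m)
  have he : e.toHom = k₀ := huniq _ fun i m => rfl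
  exact e.injective (DFunLike.congr_fun (hek.trans he.symm) n)

theorem nonempty_equiv_of_jointlySurjective (hN : IsDirectLimitCocone S N g)
    {P : Type (max x w)} [L.Structure P] {h : ∀ i, A i →[L] P} (hh : IsCocone S h)
    (hsurj : ∀ p : P, ∃ i m, h i m = p) (ℓ : P →[L] N)
    (hℓ : ∀ i m, ℓ (h i m) = g i m) :
    Nonempty (N ≃[L] P) := by
  obtain ⟨k, hk⟩ := hN.exists_hom hh
  have hleft : Function.LeftInverse ℓ k :=
    hN.eq_of_comp_eq (k := ℓ.comp k) fun i m => by rw [Hom.comp_apply, hk, hℓ]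
  have hright : Function.RightInverse ℓ k := by
    intro p
    obtain ⟨i, m, rfl⟩ := hsurj p
    rw [hℓ, hk]
  exact ⟨Hom.equivOfInverses k ℓ hleft hright⟩

end IsDirectLimitCocone

theorem PosetFilter.nonempty_of_mem (hF0 : ∅ ∉ F.sets) {V : Set X} (hV : V ∈ F.sets) :
    V.Nonempty :=
  Set.nonempty_iff_ne_empty.2 fun h => hF0 (h ▸ hV)

theorem CompFam.app_equiv_app {n : ℕ} (f : L.Functions n) {a b : Fin n → CompFam D F}
    (h : ∀ i, a i ≈ b i) : CompFam.app f a ≈ CompFam.app f b := by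
  refine F.mono' _ (F.iInter_mem _ h) _ (eqSet_upper _ _) fun p hp => ?_
  choose ha hb he using Set.mem_iInter.1 hp
  exact ⟨Set.mem_iInter.2 ha, Set.mem_iInter.2 hb, congrArg (funMap f) (funext he)⟩

theorem isUpperSet_relSet {n : ℕ} (R : L.Relations n) (a : Fin n → CompFam D F) :
    IsUpperSet (relSet R a) := by
  rintro p q hpq ⟨hp, hR⟩
  have hq : ∀ i, q ∈ (a i).dom := fun i => F.upper' _ (a i).dom_mem hpq (hp i)
  have hval : (fun i => (a i).val q (hq i)) = D.hom hpq ∘ fun i => (a i).val p (hp i) :=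
    funext fun i => ((a i).compat _ _ hpq).symm
  exact ⟨hq, hval ▸ (D.hom hpq).map_rel R _ hR⟩

theorem FilterProd.funMap_mk {n : ℕ} (f : L.Functions n) (v : Fin n → CompFam D F) :
    funMap (M := FilterProd D F) f (fun i => ⟦v i⟧) = ⟦CompFam.app f v⟧ :=
  Quotient.sound (CompFam.app_equiv_app f fun _ => Quotient.exact (Quotient.out_eq _))

def CompFam.ofElem (D : OrderedSystem L X M) {a : X} (ha : Set.Ici a ∈ F.sets) (m : M a) :
    CompFam D F where
  dom := Set.Ici a
  dom_mem := ha
  val _ hp := D.hom hp m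
  compat _ _ hb _ hbc := D.hom_comp hb hbc m

section Incl

variable (hF : ∀ a : X, Set.Ici a ∈ F.sets)

def FilterProd.incl (D : OrderedSystem L X M) (a : X) : M a →[L] FilterProd D F where
  toFun m := ⟦CompFam.ofElem D (hF a) m⟧
  map_fun' {n} f x := by
    refine (Quotient.sound ?_).trans (FilterProd.funMap_mk f _).symm
    refine F.mono' _ (hF a) _ (eqSet_upper _ _) fun p hp => ?_
    exact ⟨hp, Set.mem_iInter.2 fun _ => hp, (D.hom hp).map_fun f x⟩
  map_rel' {n} r x h := by
    refine ⟨fun i => CompFam.ofElem D (hF a) (x i), fun _ => rfl, ?_⟩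
    refine F.mono' _ (hF a) _ (isUpperSet_relSet _ _) fun p hp => ?_
    exact ⟨fun _ => hp, (D.hom hp).map_rel r x h⟩

theorem FilterProd.mk_eq_incl (c : CompFam D F) {p : X} (hp : p ∈ c.dom) :
    (⟦c⟧ : FilterProd D F) = FilterProd.incl hF D p (c.val p hp) := by
  refine Quotient.sound (F.mono' _ (hF p) _ (eqSet_upper _ _) fun q hpq => ?_)
  exact ⟨F.upper' _ c.dom_mem hpq hp, hpq, (c.compat hp _ hpq).symm⟩

theorem FilterProd.isCocone_incl : IsCocone D (FilterProd.incl hF D) :=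
  fun a _ hab m => (FilterProd.mk_eq_incl hF (CompFam.ofElem D (hF a) m) hab).symm

theorem FilterProd.exists_incl_eq (hF0 : ∅ ∉ F.sets) (x : FilterProd D F) :
    ∃ a m, FilterProd.incl hF D a m = x := by
  induction x using Quotient.inductionOn with
  | h c =>
    obtain ⟨p, hp⟩ := F.nonempty_of_mem hF0 c.dom_mem
    exact ⟨p, c.val p hp, (FilterProd.mk_eq_incl hF c hp).symm⟩

end Incl

section Lift

variable [IsDirected X (· ≤ ·)] {N : Type z} [L.Structure N] {g : ∀ a, M a →[L] N}

theorem IsCocone.apply_val_eq (hg : IsCocone D g) (c : CompFam D F) {p q : X}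
    (hp : p ∈ c.dom) (hq : q ∈ c.dom) : g p (c.val p hp) = g q (c.val q hq) := by
  obtain ⟨s, hps, hqs⟩ := directed_of (· ≤ ·) p q
  have hs : s ∈ c.dom := F.upper' _ c.dom_mem hps hp
  rw [← hg hps, c.compat hp hs hps, ← hg hqs, c.compat hq hs hqs]

variable (hF0 : ∅ ∉ F.sets) (hg : IsCocone D g)

noncomputable def FilterProd.liftFun : FilterProd D F → N :=
  Quotient.lift (fun c => g _ (c.val _ (F.nonempty_of_mem hF0 c.dom_mem).some_mem))
    fun c c' hcc' => by
      obtain ⟨p, hpc, hpc', he⟩ := F.nonempty_of_mem hF0 (V := eqSet c c') hcc'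
      simp only [hg.apply_val_eq c _ hpc, hg.apply_val_eq c' _ hpc', he]

theorem FilterProd.liftFun_mk (c : CompFam D F) {p : X} (hp : p ∈ c.dom) :
    FilterProd.liftFun hF0 hg ⟦c⟧ = g p (c.val p hp) :=
  hg.apply_val_eq c _ hp

noncomputable def FilterProd.lift : FilterProd D F →[L] N where
  toFun := FilterProd.liftFun hF0 hg
  map_fun' {n} f v := by
    obtain ⟨c, rfl⟩ : ∃ c : Fin n → CompFam D F, (fun i => ⟦c i⟧) = v :=
      ⟨fun i => (v i).out, funext fun i => Quotient.out_eq _⟩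
    obtain ⟨p, hp⟩ := F.nonempty_of_mem hF0 (CompFam.app f c).dom_mem
    rw [FilterProd.funMap_mk, FilterProd.liftFun_mk hF0 hg _ hp]
    refine ((g p).map_fun f _).trans (congrArg (funMap f) (funext fun i => ?_))
    exact (FilterProd.liftFun_mk hF0 hg (c i) _).symm
  map_rel' {n} r v := by
    rintro ⟨c, hc, hrel⟩
    obtain rfl : (fun i => ⟦c i⟧) = v := funext hc
    obtain ⟨p, hdom, hR⟩ := F.nonempty_of_mem hF0 hrel
    have hval : (FilterProd.liftFun hF0 hg ∘ fun i => ⟦c i⟧) =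
        fun i => g p ((c i).val p (hdom i)) :=
      funext fun i => FilterProd.liftFun_mk hF0 hg (c i) (hdom i)
    rw [hval]
    exact (g p).map_rel r _ hR

theorem FilterProd.lift_incl (hF : ∀ a : X, Set.Ici a ∈ F.sets) (a : X) (m : M a) :
    FilterProd.lift hF0 hg (FilterProd.incl hF D a m) = g a m :=
  (FilterProd.liftFun_mk hF0 hg _ Set.self_mem_Ici).trans (congrArg (g a) (D.hom_id a m))

end Lift

theorem IsDirectLimitCocone.nonempty_equiv_filterProd [IsDirected X (· ≤ ·)]
    (hF0 : ∅ ∉ F.sets) (hF : ∀ a : X, Set.Ici a ∈ F.sets) {N : Type z} [L.Structure N]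
    {g : ∀ a, M a →[L] N} (hN : IsDirectLimitCocone D N g) :
    Nonempty (N ≃[L] FilterProd D F) :=
  hN.nonempty_equiv_of_jointlySurjective (FilterProd.isCocone_incl hF)
    (FilterProd.exists_incl_eq hF hF0) (FilterProd.lift hF0 hN.isCocone)
    (FilterProd.lift_incl hF0 hN.isCocone hF)

/-- The direct limit of a chain of structures indexed by a nonempty well ordered poset is
isomorphic to the prime product with respect to the prime filter of principal upsets. -/
theorem stmt7 {Y : Type x} [LinearOrder Y] [Nonempty Y] (hwf : WellFoundedLT Y)
    {Mi : Y → Type w} [∀ a, L.Structure (Mi a)] (D : OrderedSystem L Y Mi)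
    (N : Type z) [L.Structure N] (g : ∀ a, Mi a →[L] N)
    (hN : IsDirectLimitCocone D N g) :
    ∃ F : PosetFilter Y, F.sets = {V : Set Y | ∃ a : Y, V = Set.Ici a} ∧ F.Prime ∧
      Nonempty (N ≃[L] FilterProd D F) := by
  have hprime := principalUpsetFilter_prime Y
  exact ⟨principalUpsetFilter Y, rfl, hprime,
    hN.nonempty_equiv_filterProd hprime.1 fun a => ⟨a, rfl⟩⟩

end PosLogic
end

section
/- A positively saturated structure M is positively universal among smaller structures with weaker positive theories: if M satisfies the positive theory of a structure N (in the same language) with |N| ≤ |M|, then there exists a homomorphism f : N → M. -/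
/-!
Well-order `B` in order type `|B|`, so that every proper initial segment of `B` has fewer than
`|A|` elements, and apply Zorn's lemma to partial maps from initial segments of `B` to `A` that
preserve positive formulas with parameters; the empty map qualifies because `A` satisfies the
positive theory of `B`. A maximal such map is total: otherwise let `b` be the least point outside
its domain. Every finite part of the positive type of `b` over the domain is realized in `A`,
since the map preserves its existential closure, and the type has fewer than `|A|` parameters,
so positive saturation realizes all of it; sending `b` to a realization extends the map.
-/

namespace PosLogic

open FirstOrder FirstOrder.Language FirstOrder.Language.Structure Set

universe u v w x y z

variable {L : FirstOrder.Language.{u, v}}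

variable {α : Type y}

variable {X : Type x} [PartialOrder X] {M : X → Type w} [∀ a, L.Structure (M a)]

variable {D : OrderedSystem L X M} {F : PosetFilter X}

section Operations

variable {β : Type z} {N : Type*} [L.Structure N] {n : ℕ}

namespace PosFormula

@[simp]
theorem realize_equal {t₁ t₂ : L.Term (α ⊕ Fin n)} {v : α → N} {xs : Fin n → N} :
    (equal t₁ t₂).Realize v xs ↔ t₁.realize (Sum.elim v xs) = t₂.realize (Sum.elim v xs) :=
  Iff.rfl

@[simp]
theorem realize_rel {l : ℕ} {R : L.Relations l} {ts : Fin l → L.Term (α ⊕ Fin n)}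
    {v : α → N} {xs : Fin n → N} :
    (rel R ts).Realize v xs ↔ RelMap R fun i => (ts i).realize (Sum.elim v xs) :=
  Iff.rfl

@[simp]
theorem realize_and {φ ψ : PosFormula L α n} {v : α → N} {xs : Fin n → N} :
    (and φ ψ).Realize v xs ↔ φ.Realize v xs ∧ ψ.Realize v xs :=
  Iff.rfl

@[simp]
theorem realize_ex {φ : PosFormula L α (n + 1)} {v : α → N} {xs : Fin n → N} :
    (ex φ).Realize v xs ↔ ∃ a, φ.Realize v (Fin.snoc xs a) :=
  Iff.rfl

theorem realize_ex_zero {φ : PosFormula L α 1} {v : α → N} {xs : Fin 0 → N} :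
    (ex φ).Realize v xs ↔ ∃ a, φ.Realize v ![a] := by
  simp only [realize_ex, show ∀ a : N, Fin.snoc xs a = ![a] from fun a => by
    ext i; fin_cases i; rfl]

def map (h : α → β) : ∀ {n : ℕ}, PosFormula L α n → PosFormula L β n
  | _, falsum => falsum
  | _, equal t₁ t₂ => equal (t₁.relabel (Sum.map h id)) (t₂.relabel (Sum.map h id))
  | _, rel R ts => rel R fun i => (ts i).relabel (Sum.map h id)
  | _, and φ ψ => and (φ.map h) (ψ.map h)
  | _, or φ ψ => or (φ.map h) (ψ.map h)
  | _, ex φ => ex (φ.map h)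

@[simp]
theorem realize_map (h : α → β) :
    ∀ {n : ℕ} (φ : PosFormula L α n) (v : β → N) (xs : Fin n → N),
      (φ.map h).Realize v xs ↔ φ.Realize (v ∘ h) xs
  | _, falsum, _, _ => Iff.rfl
  | _, equal _ _, _, _ => by simp [map, Term.realize_relabel, Sum.elim_comp_map]
  | _, rel _ _, _, _ => by simp [map, Term.realize_relabel, Sum.elim_comp_map]
  | _, and φ ψ, v, xs => and_congr (realize_map h φ v xs) (realize_map h ψ v xs)
  | _, or φ ψ, v, xs => or_congr (realize_map h φ v xs) (realize_map h ψ v xs)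
  | _, ex φ, v, xs => exists_congr fun a => realize_map h φ v (Fin.snoc xs a)

theorem map_map {δ : Type*} (h : α → β) (k : β → δ) :
    ∀ {n : ℕ} (φ : PosFormula L α n), (φ.map h).map k = φ.map (k ∘ h)
  | _, falsum => rfl
  | _, equal _ _ => by simp [map, Term.relabel_relabel, Sum.map_comp_map]
  | _, rel _ _ => by simp [map, Term.relabel_relabel, Sum.map_comp_map]
  | _, and φ ψ => by simp [map, map_map h k φ, map_map h k ψ]
  | _, or φ ψ => by simp [map, map_map h k φ, map_map h k ψ]
  | _, ex φ => by simp [map, map_map h k φ]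

/-- Parameters sent to `Sum.inr i` become the free variable `i`, placed before the
existing free variables. -/
def relabel {m : ℕ} (g : α → β ⊕ Fin m) : ∀ {n : ℕ}, PosFormula L α n → PosFormula L β (m + n)
  | _, falsum => falsum
  | _, equal t₁ t₂ => equal (t₁.relabel (BoundedFormula.relabelAux g _))
      (t₂.relabel (BoundedFormula.relabelAux g _))
  | _, rel R ts => rel R fun i => (ts i).relabel (BoundedFormula.relabelAux g _)
  | _, and φ ψ => and (φ.relabel g) (ψ.relabel g)
  | _, or φ ψ => or (φ.relabel g) (ψ.relabel g)
  | _, ex φ => ex (φ.relabel g)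

@[simp]
theorem realize_relabel {m : ℕ} (g : α → β ⊕ Fin m) :
    ∀ {n : ℕ} (φ : PosFormula L α n) (v : β → N) (xs : Fin (m + n) → N),
      (φ.relabel g).Realize v xs ↔
        φ.Realize (Sum.elim v (xs ∘ Fin.castAdd n) ∘ g) (xs ∘ Fin.natAdd m)
  | _, falsum, _, _ => Iff.rfl
  | _, equal _ _, _, _ => by simp [relabel, Term.realize_relabel]
  | _, rel _ _, _, _ => by simp [relabel, Term.realize_relabel]
  | _, and φ ψ, v, xs => and_congr (realize_relabel g φ v xs) (realize_relabel g ψ v xs)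
  | _, or φ ψ, v, xs => or_congr (realize_relabel g φ v xs) (realize_relabel g ψ v xs)
  | _, ex φ, v, xs => exists_congr fun a => by
      rw [realize_relabel g φ v (Fin.snoc xs a), Fin.snoc_comp_castAdd, Fin.snoc_comp_natAdd]

def HasFiniteParams (Ψ : PosFormula L α n) : Prop :=
  ∃ (γ : Type y) (_ : Finite γ) (φ : PosFormula L γ n) (k : γ → α), Ψ = φ.map k

theorem HasFiniteParams.and {φ ψ : PosFormula L α n} (hφ : φ.HasFiniteParams)
    (hψ : ψ.HasFiniteParams) : (φ.and ψ).HasFiniteParams := by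
  obtain ⟨γ₁, _, φ₁, k₁, rfl⟩ := hφ
  obtain ⟨γ₂, _, ψ₂, k₂, rfl⟩ := hψ
  exact ⟨γ₁ ⊕ γ₂, inferInstance, (φ₁.map Sum.inl).and (ψ₂.map Sum.inr), Sum.elim k₁ k₂,
    by simp [map, map_map]⟩

theorem exists_forall_realize_of_and_mem {p : Set (PosFormula L α n)} {v : α → N}
    (hne : p.Nonempty) (hand : ∀ φ ∈ p, ∀ ψ ∈ p, φ.and ψ ∈ p)
    (hsat : ∀ φ ∈ p, ∃ xs, φ.Realize v xs) (s : Finset (PosFormula L α n)) (hs : ↑s ⊆ p) :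
    ∃ xs, ∀ φ ∈ s, φ.Realize v xs := by
  classical
  suffices ∃ ψ ∈ p, ∀ xs, ψ.Realize v xs → ∀ φ ∈ s, φ.Realize v xs by
    obtain ⟨ψ, hψ, himp⟩ := this
    obtain ⟨xs, hxs⟩ := hsat ψ hψ
    exact ⟨xs, himp xs hxs⟩
  induction s using Finset.induction_on with
  | empty =>
    obtain ⟨ψ, hψ⟩ := hne
    exact ⟨ψ, hψ, by simp⟩
  | insert φ s _ ih =>
    obtain ⟨ψ, hψ, himp⟩ := ih ((Finset.coe_subset.2 (Finset.subset_insert φ s)).trans hs)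
    refine ⟨φ.and ψ, hand φ (hs (Finset.mem_insert_self φ s)) ψ hψ, fun xs hxs => ?_⟩
    simpa [hxs.1] using himp xs hxs.2

end PosFormula

end Operations

section PartialHom

variable {A B : Type w} [L.Structure A] [L.Structure B]

def homOfPreserves (f : B → A)
    (hf : ∀ (γ : Type w) [Finite γ] (h : γ → B) (φ : PosFormula L γ 0),
      φ.Realize h finZeroElim → φ.Realize (f ∘ h) finZeroElim) : B →[L] A where
  toFun := f
  map_fun' {k} g x := by
    let φ : PosFormula L (Option (ULift.{w} (Fin k))) 0 :=
      .equal (.func g fun i => .var (.inl (some ⟨i⟩))) (.var (.inl none))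
    have := hf _ (fun i => i.elim (funMap g x) fun i => x i.down) φ (by simp [φ])
    simpa [φ, Function.comp_def] using this.symm
  map_rel' {k} R x hx := by
    let φ : PosFormula L (ULift.{w} (Fin k)) 0 := .rel R fun i => .var (.inl ⟨i⟩)
    simpa [φ, Function.comp_def] using hf _ (fun i => x i.down) φ (by simpa [φ] using hx)

variable (L) in
/-- Partial maps `B ⇀ A` are encoded by their graphs, with parameters taken from the graph:
preserving `x = y` forces such a graph to be functional. -/
def PreservesPosFormulas (G : Set (B × A)) : Prop :=
  ∀ (γ : Type w) [Finite γ] (h : γ → G) (φ : PosFormula L γ 0),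
    φ.Realize (fun i => (h i).1.1) finZeroElim → φ.Realize (fun i => (h i).1.2) finZeroElim

namespace PreservesPosFormulas

theorem empty
    (hth : ∀ φ : PosSentence L, PosSentence.Realize B φ → PosSentence.Realize A φ) :
    PreservesPosFormulas L (∅ : Set (B × A)) := by
  intro γ _ h φ hφ
  have : IsEmpty γ := ⟨fun i => (h i).2⟩
  have hB : PosSentence.Realize B (φ.map isEmptyElim) := by
    rw [PosSentence.Realize, PosFormula.realize_map]
    convert hφ using 2
  have hA := hth _ hB
  rw [PosSentence.Realize, PosFormula.realize_map] at hA
  convert hA using 2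

theorem sUnion {c : Set (Set (B × A))} (hc : IsChain (· ⊆ ·) c) (hne : c.Nonempty)
    (hG : ∀ G ∈ c, PreservesPosFormulas L G) : PreservesPosFormulas L (⋃₀ c) := by
  intro γ _ h φ hφ
  obtain ⟨G, hGc, hsub⟩ := hc.directedOn.exists_mem_subset_of_finite_of_subset_sUnion hne
    (Set.finite_range fun i => (h i : B × A)) (Set.range_subset_iff.2 fun i => (h i).2)
  exact hG G hGc γ (fun i => ⟨h i, hsub ⟨i, rfl⟩⟩) φ hφ

theorem injOn_fst {G : Set (B × A)} (hG : PreservesPosFormulas L G) :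
    Set.InjOn Prod.fst G := by
  intro p hp q hq hpq
  let φ : PosFormula L (ULift.{w} Bool) 0 := .equal (.var (.inl ⟨true⟩)) (.var (.inl ⟨false⟩))
  have := hG _ (fun i => if i.down then ⟨p, hp⟩ else ⟨q, hq⟩) φ (by simpa [φ] using hpq)
  exact Prod.ext hpq (by simpa [φ] using this)

end PreservesPosFormulas

variable (L) in
/-- The finitely parametrized part of the positive type of `b` over the domain of `G`. -/
def posType (G : Set (B × A)) (b : B) : Set (PosFormula L G 1) :=
  {Ψ | Ψ.HasFiniteParams ∧ Ψ.Realize (fun p => p.1.1) ![b]}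

theorem exists_realize_of_mem_posType {G : Set (B × A)} (hG : PreservesPosFormulas L G) {b : B}
    {Ψ : PosFormula L G 1} (hΨ : Ψ ∈ posType L G b) : ∃ a, Ψ.Realize (fun p => p.1.2) ![a] := by
  obtain ⟨⟨γ, _, φ, k, rfl⟩, hb⟩ := hΨ
  have hB : (PosFormula.ex φ).Realize (fun i => (k i).1.1) finZeroElim :=
    PosFormula.realize_ex_zero.2 ⟨b, by simpa [Function.comp_def] using hb⟩
  obtain ⟨a, ha⟩ := PosFormula.realize_ex_zero.1 (hG γ k _ hB)
  exact ⟨a, by simpa [Function.comp_def] using ha⟩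

theorem exists_forall_realize_posType {κ : Cardinal.{w}}
    (hsat : PositivelySaturatedAt (L := L) A κ) {G : Set (B × A)}
    (hG : PreservesPosFormulas L G) (hcard : Cardinal.mk G < κ) (b : B) :
    ∃ a, ∀ Ψ ∈ posType L G b, Ψ.Realize (fun p => p.1.2) ![a] := by
  have hne : (posType L G b).Nonempty := by
    let φ : PosFormula L PEmpty.{w + 1} 1 := .equal (.var (.inr 0)) (.var (.inr 0))
    exact ⟨φ.map PEmpty.elim, ⟨PEmpty, inferInstance, φ, _, rfl⟩, by simp [φ]⟩
  have hand : ∀ φ ∈ posType L G b, ∀ ψ ∈ posType L G b, φ.and ψ ∈ posType L G b :=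
    fun φ hφ ψ hψ => ⟨hφ.1.and hψ.1, hφ.2, hψ.2⟩
  have hfin := PosFormula.exists_forall_realize_of_and_mem hne hand fun Ψ hΨ => by
    obtain ⟨a, ha⟩ := exists_realize_of_mem_posType hG hΨ
    exact ⟨![a], ha⟩
  obtain ⟨xs, hxs⟩ := hsat G (fun p => p.1.2) hcard 1 _ hfin
  refine ⟨xs 0, fun Ψ hΨ => ?_⟩
  convert hxs Ψ hΨ
  ext i
  fin_cases i
  rfl

theorem preservesPosFormulas_insert {G : Set (B × A)} {b : B} {a : A} (ha : ∀ Ψ ∈ posType L G b, Ψ.Realize (fun p => p.1.2) ![a]) :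
    PreservesPosFormulas L (insert (b, a) G) := by
  classical
  intro γ _ h φ hφ
  let γ₀ := {i // (h i : B × A) ∈ G}
  let k₀ : γ₀ → G := fun i => ⟨h i.1, i.2⟩
  -- the parameters equal to `(b, a)` become the free variable of the type
  let kk : γ → γ₀ ⊕ Fin 1 := fun i => if hi : (h i : B × A) ∈ G then .inl ⟨i, hi⟩ else .inr 0
  have hval : ∀ {P : Type w} (f : B × A → P),
      Sum.elim (fun i => f (k₀ i)) (![f (b, a)] ∘ Fin.castAdd 0) ∘ kk = fun i => f (h i) := by
    intro P f
    funext i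
    by_cases hi : (h i : B × A) ∈ G
    · simp [kk, hi, k₀]
    · simp only [Function.comp_apply, kk, dif_neg hi]
      simp [(Set.mem_insert_iff.1 (h i).2).resolve_right hi]
  let Ψ : PosFormula L G 1 := (φ.relabel kk).map k₀
  have hΨ : Ψ ∈ posType L G b := by
    refine ⟨⟨γ₀, inferInstance, φ.relabel kk, k₀, rfl⟩, ?_⟩
    simp only [Ψ, PosFormula.realize_map, PosFormula.realize_relabel]
    exact (congrArg₂ φ.Realize (hval Prod.fst) (Subsingleton.elim _ _)).mpr hφ
  have hA := ha Ψ hΨ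
  simp only [Ψ, PosFormula.realize_map, PosFormula.realize_relabel] at hA
  exact (congrArg₂ φ.Realize (hval Prod.snd) (Subsingleton.elim _ _)).mp hA

theorem PreservesPosFormulas.nonempty_hom {G : Set (B × A)} (hG : PreservesPosFormulas L G)
    (htot : ∀ b, ∃ a, (b, a) ∈ G) : Nonempty (B →[L] A) := by
  choose f hf using htot
  exact ⟨homOfPreserves f fun γ _ h φ => hG γ (fun i => ⟨(h i, f (h i)), hf _⟩) φ⟩

end PartialHom

theorem nonempty_hom_of_isWellOrder {A B : Type w} [L.Structure A] [L.Structure B]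
    {κ : Cardinal.{w}} (hsat : PositivelySaturatedAt (L := L) A κ)
    (hth : ∀ φ : PosSentence L, PosSentence.Realize B φ → PosSentence.Realize A φ)
    (r : B → B → Prop) [IsWellOrder B r] (hsmall : ∀ b, Cardinal.mk {y // r y b} < κ) :
    Nonempty (B →[L] A) := by
  let S : Set (Set (B × A)) := {G | PreservesPosFormulas L G ∧
    ∀ ⦃x y⦄, r x y → y ∈ Prod.fst '' G → x ∈ Prod.fst '' G}
  have hchain : ∀ c ⊆ S, IsChain (· ⊆ ·) c → c.Nonempty → ∃ ub ∈ S, ∀ G ∈ c, G ⊆ ub := by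
    intro c hcS hc hne
    refine ⟨⋃₀ c, ⟨.sUnion hc hne fun G hG => (hcS hG).1, ?_⟩,
      fun G hG => Set.subset_sUnion_of_mem hG⟩
    rintro x y hxy ⟨p, ⟨G, hGc, hpG⟩, rfl⟩
    exact Set.image_mono (Set.subset_sUnion_of_mem hGc) ((hcS hGc).2 hxy ⟨p, hpG, rfl⟩)
  obtain ⟨G, -, ⟨hG, hlow⟩, hmax⟩ :=
    zorn_subset_nonempty S hchain ∅ ⟨.empty hth, by simp⟩
  refine hG.nonempty_hom fun b => ?_
  by_contra! hb
  have hcompl : (Prod.fst '' G)ᶜ.Nonempty := ⟨b, fun ⟨p, hp, hpb⟩ => hb p.2 (hpb ▸ hp)⟩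
  have hwf : WellFounded r := IsWellFounded.wf
  let b₀ := hwf.min _ hcompl
  have hb₀ : b₀ ∉ Prod.fst '' G := hwf.min_mem _ hcompl
  have hbelow : ∀ y, r y b₀ → y ∈ Prod.fst '' G := fun y hy =>
    not_not.1 fun hy' => hwf.not_lt_min _ hy' hy
  have hdom : Prod.fst '' G ⊆ {y | r y b₀} := by
    intro y hy
    rcases trichotomous_of r y b₀ with h | rfl | h
    exacts [h, absurd hy hb₀, absurd (hlow h hy) hb₀]
  have hcard : Cardinal.mk G < κ := by
    rw [← Cardinal.mk_image_eq_of_injOn _ _ hG.injOn_fst]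
    exact (Cardinal.mk_le_mk_of_subset hdom).trans_lt (hsmall b₀)
  obtain ⟨a, ha⟩ := exists_forall_realize_posType hsat hG hcard b₀
  have hins : insert (b₀, a) G ∈ S := by
    refine ⟨preservesPosFormulas_insert ha, ?_⟩
    rintro x y hxy ⟨p, hp | hp, rfl⟩
    · exact Set.image_mono (Set.subset_insert _ _) (hbelow x (by rwa [hp] at hxy))
    · exact Set.image_mono (Set.subset_insert _ _) (hlow hxy ⟨p, hp, rfl⟩)
  exact hb₀ ⟨(b₀, a), hmax hins (Set.subset_insert _ _) (Set.mem_insert _ _), rfl⟩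

/-- A positively saturated structure is positively universal among smaller structures with
weaker positive theories. -/
theorem stmt15 (A B : Type w) [L.Structure A] [L.Structure B]
    (hsat : PositivelySaturated (L := L) A)
    (hth : ∀ φ : PosSentence L, PosSentence.Realize B φ → PosSentence.Realize A φ)
    (hcard : Cardinal.mk B ≤ Cardinal.mk A) :
    Nonempty (B →[L] A) := by
  obtain ⟨r, _, hr⟩ := Cardinal.exists_ord_eq B
  exact nonempty_hom_of_isWellOrder hsat hth r fun b =>
    (Cardinal.card_typein_lt b hr).trans_le hcard

end PosLogic
end
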